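/- arXiv:2503.03019 — 4 statements merged into one kernel-verified Lean document; each statement's English description precedes it below -/
import Mathlib

section
/- Let a > 0 and d > 0. For every τ with 0 < τ ≤ 2d/a², every h > 0, and every η ∈ (0,1], one has exp(−8dτη/h²) + (a²h²(1−η)/(4d²η))·(exp(−4dτη/h²) − 1)² ≤ 1. (This is the stability of the ETD-RK1 central finite-difference scheme for u_t + a u_x = d u_{xx} under the time-step constraint τ ≤ 2d/a².) -/
/-!
Write `x = 4dτη/h²`, `E = e^{-x}` and `c = a²h²(1-η)/(4d²η)`, so that the claim is
`E² + c(1-E)² ≤ 1`. Since `1 - E² = (1-E)(1+E)` and `0 ≤ 1 - E`, it suffices that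
`c(1-E) ≤ 1+E`. The inequality `tanh(x/2) ≤ x/2`, i.e. `2(1-E) ≤ x(1+E)`, reduces this to
`cx ≤ 2`, and `cx = a²τ(1-η)/d ≤ a²τ/d ≤ 2` is the step restriction `τ ≤ 2d/a²`.
-/

open Real

lemma two_mul_one_sub_exp_neg_le {x : ℝ} (hx : 0 ≤ x) :
    2 * (1 - exp (-x)) ≤ x * (1 + exp (-x)) := by
  let f : ℝ → ℝ := fun t => t * (1 + exp (-t)) - 2 * (1 - exp (-t))
  have hf : ∀ t, HasDerivAt f (1 - (1 + t) * exp (-t)) t := by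
    intro t
    have he : HasDerivAt (fun t => exp (-t)) (-exp (-t)) t := by
      simpa using (hasDerivAt_neg t).exp
    refine (((hasDerivAt_id' t).mul (he.const_add 1)).sub
      ((he.const_sub 1).const_mul 2)).congr_deriv ?_
    ring
  have hf' : ∀ t, 0 ≤ 1 - (1 + t) * exp (-t) := by
    intro t
    have : (1 + t) * exp (-t) ≤ exp t * exp (-t) := by
      gcongr
      linarith [add_one_le_exp t]
    rw [← exp_add, add_neg_cancel, exp_zero] at this
    linarith
  have := monotone_of_hasDerivAt_nonneg hf hf' hx
  simp only [f, neg_zero, exp_zero] at this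
  linarith

lemma exp_neg_sq_add_mul_sq_le_one {x c : ℝ} (hx : 0 ≤ x) (hcx : c * x ≤ 2) :
    exp (-x) ^ 2 + c * (exp (-x) - 1) ^ 2 ≤ 1 := by
  set E := exp (-x)
  have hE1 : E ≤ 1 := exp_le_one_iff.mpr (neg_nonpos.mpr hx)
  have hE0 : 0 < E := exp_pos _
  have hkey : c * (1 - E) ≤ 1 + E := by
    rcases le_total c 0 with hc | hc
    · nlinarith
    · nlinarith [two_mul_one_sub_exp_neg_le hx]
  nlinarith [mul_le_mul_of_nonneg_left hkey (sub_nonneg.mpr hE1)]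

theorem etdrk1_central_stability_general_general
    (a d τ h η : ℝ) (hd : 0 < d)
    (hτ0 : 0 < τ) (hτ : τ ≤ 2 * d / a ^ 2) (hh : 0 < h)
    (hη0 : 0 < η) :
    Real.exp (-8 * d * τ * η / h ^ 2) +
      (a ^ 2 * h ^ 2 * (1 - η) / (4 * d ^ 2 * η)) *
        (Real.exp (-4 * d * τ * η / h ^ 2) - 1) ^ 2 ≤ 1 := by
  set x := 4 * d * τ * η / h ^ 2 with hx
  have hsq : exp (-8 * d * τ * η / h ^ 2) = exp (-x) ^ 2 := by
    rw [← exp_nat_mul, hx]; ring_nf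
  have hneg : -4 * d * τ * η / h ^ 2 = -x := by ring
  have hcx : a ^ 2 * h ^ 2 * (1 - η) / (4 * d ^ 2 * η) * x = a ^ 2 * τ * (1 - η) / d := by
    rw [hx]; field_simp
  have hτ' : a ^ 2 * τ ≤ 2 * d := by
    rw [mul_comm]; exact mul_le_of_le_div₀ (by positivity) (sq_nonneg a) hτ
  rw [hsq, hneg]
  refine exp_neg_sq_add_mul_sq_le_one (by positivity) ?_
  rw [hcx, div_le_iff₀ hd]
  nlinarith [mul_nonneg (mul_nonneg (sq_nonneg a) hτ0.le) hη0.le]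

/-- Stability of the ETD-RK1 central finite-difference scheme for
`u_t + a u_x = d u_{xx}` (`a, d > 0`) under the time-step constraint `τ ≤ 2d/a²`:
for all `h > 0` and `η ∈ (0,1]`,
`exp(−8dτη/h²) + (a²h²(1−η)/(4d²η))·(exp(−4dτη/h²) − 1)² ≤ 1`. -/
theorem etdrk1_central_stability_general
    (a d τ h η : ℝ) (ha : 0 < a) (hd : 0 < d)
    (hτ0 : 0 < τ) (hτ : τ ≤ 2 * d / a ^ 2) (hh : 0 < h)
    (hη0 : 0 < η) (hη1 : η ≤ 1) :
    Real.exp (-8 * d * τ * η / h ^ 2) +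
      (a ^ 2 * h ^ 2 * (1 - η) / (4 * d ^ 2 * η)) *
        (Real.exp (-4 * d * τ * η / h ^ 2) - 1) ^ 2 ≤ 1 :=
  etdrk1_central_stability_general_general a d τ h η hd hτ0 hτ hh hη0
end

section
/- For every h > 0, every τ with 0 < τ ≤ h, and every η ∈ (0,1], one has Q_u(τ,h,η) ≤ 1, where Q_u(τ,h,η) = (exp(−4τη/h²) + (h/2)·(exp(−4τη/h²) − 1))² + (h²(1−η)/(4η))·(exp(−4τη/h²) − 1)². (This is the second half of the stability proof for the upwind ETD-RK1 scheme, covering the CFL-type regime τ ≤ h; it follows from the case τ = h by observing that λ ↦ Q_u evaluated along a suitable parametrization is a concave-up quadratic in λ = τ/h bounded by 1 at λ = 0 and λ = 1.) -/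
/-!
Write `E = exp (-x)` with `x = 4τη/h²`. Then
`Q_u - 1 = (1 - E) (h² (1 - E) - 4η (1 + E + hE)) / (4η)`, so stability reduces to
`h² (1 - E) ≤ 4η (1 + E + hE)`. Since `4η = x h² / τ` and `τ ≤ h`, it suffices that
`h (1 - (1 + x) E) ≤ x (1 + E)`, and as `x h ≤ 4` this follows from
`4 (eˣ - 1 - x) ≤ x² (eˣ + 1)`: the bound `(2 - x) eˣ ≤ 2 + x` (i.e. `tanh (x/2) ≤ x/2`)
multiplied by `2 + x`.
-/

open Real

lemma one_sub_mul_exp_le_one (t : ℝ) : (1 - t) * exp t ≤ 1 := by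
  have h := mul_le_mul_of_nonneg_right (add_one_le_exp (-t)) (exp_pos t).le
  rwa [← exp_add, neg_add_cancel, exp_zero, neg_add_eq_sub] at h

lemma two_sub_mul_exp_le_two_add {x : ℝ} (hx : 0 ≤ x) : (2 - x) * exp x ≤ 2 + x := by
  let f : ℝ → ℝ := fun y => 2 + y - (2 - y) * exp y
  have hf : ∀ y, HasDerivAt f (1 - (1 - y) * exp y) y := fun y =>
    (((hasDerivAt_id' y).const_add 2).sub
      (((hasDerivAt_id' y).const_sub 2).mul (hasDerivAt_exp y))).congr_deriv (by ring)
  have hmono : Monotone f := monotone_of_deriv_nonneg (fun y => (hf y).differentiableAt)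
    fun y => (hf y).deriv ▸ sub_nonneg.2 (one_sub_mul_exp_le_one y)
  have := hmono hx
  simp only [f, exp_zero] at this
  linarith

lemma four_mul_exp_sub_one_sub_le {x : ℝ} (hx : 0 ≤ x) :
    4 * (exp x - 1 - x) ≤ x ^ 2 * (exp x + 1) := by
  nlinarith [mul_le_mul_of_nonneg_right (two_sub_mul_exp_le_two_add hx)
    (by linarith : (0 : ℝ) ≤ 2 + x)]

lemma mul_one_sub_one_add_mul_exp_neg_le {x h : ℝ} (hx : 0 < x) (hxh : x * h ≤ 4) :
    h * (1 - (1 + x) * exp (-x)) ≤ x * (1 + exp (-x)) := by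
  have hE : exp x * exp (-x) = 1 := by rw [← exp_add, add_neg_cancel, exp_zero]
  have hnonneg : 0 ≤ 1 - (1 + x) * exp (-x) := by
    nlinarith [mul_le_mul_of_nonneg_right (add_one_le_exp x) (exp_pos (-x)).le]
  have hC : 4 * (1 - (1 + x) * exp (-x)) ≤ x ^ 2 * (1 + exp (-x)) := by
    nlinarith [mul_le_mul_of_nonneg_right (four_mul_exp_sub_one_sub_le hx.le) (exp_pos (-x)).le]
  refine le_of_mul_le_mul_left ?_ hx
  calc x * (h * (1 - (1 + x) * exp (-x))) = x * h * (1 - (1 + x) * exp (-x)) := by ring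
    _ ≤ 4 * (1 - (1 + x) * exp (-x)) := mul_le_mul_of_nonneg_right hxh hnonneg
    _ ≤ x * (x * (1 + exp (-x))) := by linarith

lemma upwind_growth_sq_le_one {E h η : ℝ} (hη : 0 < η) (hE : E ≤ 1)
    (hkey : h ^ 2 * (1 - E) ≤ 4 * η * (1 + E + h * E)) :
    (E + h / 2 * (E - 1)) ^ 2 + h ^ 2 * (1 - η) / (4 * η) * (E - 1) ^ 2 ≤ 1 := by
  have hid : (E + h / 2 * (E - 1)) ^ 2 + h ^ 2 * (1 - η) / (4 * η) * (E - 1) ^ 2 - 1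
      = (1 - E) * (h ^ 2 * (1 - E) - 4 * η * (1 + E + h * E)) / (4 * η) := by
    field_simp; ring
  have hdiff : (1 - E) * (h ^ 2 * (1 - E) - 4 * η * (1 + E + h * E)) / (4 * η) ≤ 0 :=
    div_nonpos_of_nonpos_of_nonneg
      (mul_nonpos_of_nonneg_of_nonpos (by linarith) (by linarith)) (by positivity)
  linarith

/-- Second half of the stability proof for the upwind ETD-RK1 scheme, covering
the CFL-type regime `τ ≤ h`: for every `h > 0`, `0 < τ ≤ h`, and `η ∈ (0,1]`,
`Q_u(τ,h,η) = (exp(−4τη/h²) + (h/2)(exp(−4τη/h²) − 1))²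
  + (h²(1−η)/(4η))(exp(−4τη/h²) − 1)² ≤ 1`. -/
theorem etdrk1_upwind_stability_tau_le_h
    (τ h η : ℝ) (hh : 0 < h) (hτ0 : 0 < τ) (hτ : τ ≤ h)
    (hη0 : 0 < η) (hη1 : η ≤ 1) :
    (Real.exp (-4 * τ * η / h ^ 2) +
        (h / 2) * (Real.exp (-4 * τ * η / h ^ 2) - 1)) ^ 2 +
      (h ^ 2 * (1 - η) / (4 * η)) * (Real.exp (-4 * τ * η / h ^ 2) - 1) ^ 2 ≤ 1 := by
  set x := 4 * τ * η / h ^ 2 with hx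
  have hx0 : 0 < x := by positivity
  have hxh2 : x * h ^ 2 = 4 * τ * η := by rw [hx]; field_simp
  have hxh : x * h ≤ 4 := by nlinarith
  rw [show -4 * τ * η / h ^ 2 = -x by ring]
  set E := exp (-x)
  have hE : E ≤ 1 := exp_le_one_iff.2 (by linarith)
  refine upwind_growth_sq_le_one hη0 hE ?_
  have hhE : h * (1 - E) ≤ x * (1 + E + h * E) := by
    linarith [mul_one_sub_one_add_mul_exp_neg_le hx0 hxh]
  refine le_of_mul_le_mul_left ?_ hτ0
  calc τ * (h ^ 2 * (1 - E)) = h ^ 2 * (τ * (1 - E)) := by ring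
    _ ≤ h ^ 2 * (h * (1 - E)) := by gcongr
    _ ≤ h ^ 2 * (x * (1 + E + h * E)) := by gcongr
    _ = τ * (4 * η * (1 + E + h * E)) := by linear_combination (1 + E + h * E) * hxh2
end

section
/- Let a > 0 and d > 0. For every τ with 0 < τ ≤ 2d/a², every h > 0, and every η ∈ [0,1], one has 1 + (4a²τ²/h²)·η(1−η) ≤ (1 + (4dτ/h²)·η)². (This is the stability of the first-order IMEX-RK central finite-difference scheme for u_t + a u_x = d u_{xx} under the time-step constraint τ ≤ 2d/a².) -/
/-! The squared growth factor is `1 + A η(1-η)` against `(1 + B η)²` with `A = 4a²τ²/h²` and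
`B = 4dτ/h²`. Expanding the square, the inequality follows from `A η(1-η) ≤ A η ≤ 2B η`, and
`A ≤ 2B` is exactly the time-step restriction `a²τ ≤ 2d`. -/

theorem one_add_mul_mul_one_sub_le_sq {A B η : ℝ} (hA : 0 ≤ A) (hAB : A ≤ 2 * B) (hη : 0 ≤ η) :
    1 + A * (η * (1 - η)) ≤ (1 + B * η) ^ 2 := by
  have hgap : 0 ≤ (2 * B - A) * η := mul_nonneg (sub_nonneg.2 hAB) hη
  nlinarith [mul_nonneg hA (sq_nonneg η), sq_nonneg (B * η)]

theorem advection_coeff_le_two_mul_diffusion_coeff {a d τ h : ℝ} (hτ0 : 0 ≤ τ)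
    (hcfl : a ^ 2 * τ ≤ 2 * d) :
    4 * a ^ 2 * τ ^ 2 / h ^ 2 ≤ 2 * (4 * d * τ / h ^ 2) := by
  rw [mul_div_assoc']
  apply div_le_div_of_nonneg_right _ (sq_nonneg h)
  nlinarith [mul_le_mul_of_nonneg_left hcfl hτ0]

theorem imexrk1_central_stability_general_general
    (a d τ h η : ℝ) (ha : 0 < a)
    (hτ0 : 0 < τ) (hτ : τ ≤ 2 * d / a ^ 2)
    (hη0 : 0 ≤ η) :
    1 + (4 * a ^ 2 * τ ^ 2 / h ^ 2) * (η * (1 - η)) ≤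
      (1 + (4 * d * τ / h ^ 2) * η) ^ 2 := by
  have hcfl : a ^ 2 * τ ≤ 2 * d := by
    rw [mul_comm]
    exact (le_div_iff₀ (by positivity)).1 hτ
  exact one_add_mul_mul_one_sub_le_sq (by positivity)
    (advection_coeff_le_two_mul_diffusion_coeff hτ0.le hcfl) hη0

/-- Stability of the first-order IMEX-RK central finite-difference scheme for
`u_t + a u_x = d u_{xx}` (`a, d > 0`) under the time-step constraint `τ ≤ 2d/a²`:
for all `h > 0` and `η ∈ [0,1]`,
`1 + (4a²τ²/h²)·η(1−η) ≤ (1 + (4dτ/h²)·η)²`. -/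
theorem imexrk1_central_stability_general
    (a d τ h η : ℝ) (ha : 0 < a) (hd : 0 < d)
    (hτ0 : 0 < τ) (hτ : τ ≤ 2 * d / a ^ 2) (hh : 0 < h)
    (hη0 : 0 ≤ η) (hη1 : η ≤ 1) :
    1 + (4 * a ^ 2 * τ ^ 2 / h ^ 2) * (η * (1 - η)) ≤
      (1 + (4 * d * τ / h ^ 2) * η) ^ 2 :=
  imexrk1_central_stability_general_general a d τ h η ha hτ0 hτ hη0
end

section
/- Let a > 0 and d > 0. For every h > 0, every τ with 0 < τ ≤ 2d/a² + h/a, and every η ∈ [0,1], one has (1 − (2aτ/h)η)² + (4a²τ²/h²)·η(1−η) ≤ (1 + (4dτ/h²)·η)². (This is the stability of the first-order IMEX-RK upwind finite-difference scheme for u_t + a u_x = d u_{xx} under the time-step constraint τ ≤ 2d/a² + h/a.) -/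
/-! In terms of the Courant number `p = aτ/h` and the diffusion number `q = dτ/h²`, the right side
minus the left side is `4η(2q + p - p²) + 16q²η²`, and multiplying the time-step restriction by
`a²τ/h² ≥ 0` turns it into `p² ≤ 2q + p`. -/

theorem sq_one_sub_add_le_sq_one_add {R : Type*} [CommRing R] [LinearOrder R]
    [IsStrictOrderedRing R] {p q η : R} (hη : 0 ≤ η) (hpq : p ^ 2 ≤ 2 * q + p) :
    (1 - 2 * p * η) ^ 2 + 4 * p ^ 2 * (η * (1 - η)) ≤ (1 + 4 * q * η) ^ 2 := by
  have hdiff : (1 + 4 * q * η) ^ 2 - ((1 - 2 * p * η) ^ 2 + 4 * p ^ 2 * (η * (1 - η))) =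
      4 * η * (2 * q + p - p ^ 2) + (4 * q * η) ^ 2 := by ring
  have hnonneg : 0 ≤ 4 * η * (2 * q + p - p ^ 2) + (4 * q * η) ^ 2 :=
    add_nonneg (mul_nonneg (by positivity) (sub_nonneg.mpr hpq)) (sq_nonneg _)
  linarith

theorem sq_courant_le_of_timestep_le {K : Type*} [Field K] [LinearOrder K]
    [IsStrictOrderedRing K] {a d τ h : K} (ha : a ≠ 0) (hτ0 : 0 ≤ τ)
    (hτ : τ ≤ 2 * d / a ^ 2 + h / a) :
    (a * τ / h) ^ 2 ≤ 2 * (d * τ / h ^ 2) + a * τ / h :=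
  calc (a * τ / h) ^ 2 = τ * (a ^ 2 * τ / h ^ 2) := by ring
    _ ≤ (2 * d / a ^ 2 + h / a) * (a ^ 2 * τ / h ^ 2) :=
      mul_le_mul_of_nonneg_right hτ (by positivity)
    _ = 2 * (d * τ / h ^ 2) + a * τ / h := by field_simp

theorem imexrk1_upwind_stability_general_general
    (a d τ h η : ℝ) (ha : 0 < a)
    (hτ0 : 0 < τ) (hτ : τ ≤ 2 * d / a ^ 2 + h / a)
    (hη0 : 0 ≤ η) :
    (1 - (2 * a * τ / h) * η) ^ 2 + (4 * a ^ 2 * τ ^ 2 / h ^ 2) * (η * (1 - η)) ≤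
      (1 + (4 * d * τ / h ^ 2) * η) ^ 2 := by
  calc _ = (1 - 2 * (a * τ / h) * η) ^ 2 + 4 * (a * τ / h) ^ 2 * (η * (1 - η)) := by ring
    _ ≤ (1 + 4 * (d * τ / h ^ 2) * η) ^ 2 :=
      sq_one_sub_add_le_sq_one_add hη0 (sq_courant_le_of_timestep_le ha.ne' hτ0.le hτ)
    _ = _ := by ring

/-- Stability of the first-order IMEX-RK upwind finite-difference scheme for
`u_t + a u_x = d u_{xx}` (`a, d > 0`) under the time-step constraint
`τ ≤ 2d/a² + h/a`: for all `h > 0` and `η ∈ [0,1]`,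
`(1 − (2aτ/h)η)² + (4a²τ²/h²)·η(1−η) ≤ (1 + (4dτ/h²)·η)²`. -/
theorem imexrk1_upwind_stability_general
    (a d τ h η : ℝ) (ha : 0 < a) (hd : 0 < d) (hh : 0 < h)
    (hτ0 : 0 < τ) (hτ : τ ≤ 2 * d / a ^ 2 + h / a)
    (hη0 : 0 ≤ η) (hη1 : η ≤ 1) :
    (1 - (2 * a * τ / h) * η) ^ 2 + (4 * a ^ 2 * τ ^ 2 / h ^ 2) * (η * (1 - η)) ≤
      (1 + (4 * d * τ / h ^ 2) * η) ^ 2 :=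
  imexrk1_upwind_stability_general_general a d τ h η ha hτ0 hτ hη0
end
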